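/- arXiv:2204.01339 — 2 statements merged into one kernel-verified Lean document; each statement's English description precedes it below -/
import Mathlib

section
/- Let v : EuclideanSpace ℝ (Fin 2) → ℝ be continuously differentiable. Let z_a ≠ z_b be points of the plane, h = ‖z_b − z_a‖, t = h⁻¹ • (z_b − z_a) the unit tangent, and n the unit normal obtained from t by the clockwise quarter rotation (n has coordinates (t₂, −t₁)). Then h • ∫ τ in (0,1), ∇v(z_a + τ • (z_b − z_a)) = (h * ∫ τ in (0,1), ⟪∇v(z_a + τ • (z_b − z_a)), n⟫) • n + (v z_b − v z_a) • t, where ∇v denotes the gradient. (The line integral of the gradient along an edge decomposes into the normal-derivative moment times n plus the tangential jump v(z_{i+1}) − v(z_i) times t; this is the identity ∫_{∂K}∇v ds = ∑_e n_e ∫_e ∂_n v ds + ∑_i t_{e_i}(v(z_{i+1}) − v(z_i)) on a single edge.) -/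
/-!
Decompose the averaged gradient `I` along the orthogonal pair `(n, t)`. In the plane the quarter
rotation `n` of any `t` satisfies `‖t‖² • w = ⟪w, n⟫ • n + ⟪w, t⟫ • t`, so `h • I` splits into
`(h * ⟪I, n⟫) • n + ⟪I, h • t⟫ • t`; integrals commute with `⟪·, c⟫`, and `h • t = z_b - z_a` turns
the tangential coefficient into `∫ ∂_τ v (z_a + τ (z_b - z_a)) dτ = v z_b - v z_a`.
-/

open MeasureTheory
open scoped RealInnerProductSpace

section NormedSpace

variable {E : Type*} [NormedAddCommGroup E] [NormedSpace ℝ E]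

theorem norm_smul_inv_norm_smul (d : E) : ‖d‖ • ‖d‖⁻¹ • d = d := by
  rcases eq_or_ne d 0 with rfl | hd
  · simp
  · rw [smul_smul, mul_inv_cancel₀ (norm_ne_zero_iff.mpr hd), one_smul]

theorem norm_mul_norm_inv_norm_smul_sq (d : E) : ‖d‖ * ‖‖d‖⁻¹ • d‖ ^ 2 = ‖d‖ := by
  rcases eq_or_ne d 0 with rfl | hd
  · simp
  · rw [norm_smul, norm_inv, norm_norm, inv_mul_cancel₀ (norm_ne_zero_iff.mpr hd), one_pow,
      mul_one]

end NormedSpace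

theorem integral_inner_const_right {α E : Type*} [MeasurableSpace α] {μ : Measure α}
    [NormedAddCommGroup E] [InnerProductSpace ℝ E] [CompleteSpace E] {f : α → E}
    (hf : Integrable f μ) (c : E) : ∫ x, ⟪f x, c⟫ ∂μ = ⟪∫ x, f x ∂μ, c⟫ := by
  simpa only [real_inner_comm c] using integral_inner hf c

section Gradient

variable {E : Type*} [NormedAddCommGroup E] [InnerProductSpace ℝ E] [CompleteSpace E]
  {v : E → ℝ}

theorem ContDiff.continuous_gradient (hv : ContDiff ℝ 1 v) : Continuous (gradient v) :=
  (InnerProductSpace.toDual ℝ E).symm.continuous.comp (hv.continuous_fderiv one_ne_zero)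

theorem ContDiff.hasDerivAt_comp_add_smul (hv : ContDiff ℝ 1 v) (a d : E) (τ : ℝ) :
    HasDerivAt (fun s : ℝ => v (a + s • d)) ⟪gradient v (a + τ • d), d⟫ τ := by
  have hline : HasDerivAt (fun s : ℝ => a + s • d) d τ := by
    simpa using ((hasDerivAt_id τ).smul_const d).const_add a
  exact (hv.differentiable one_ne_zero _).hasGradientAt.hasFDerivAt.comp_hasDerivAt τ hline

theorem ContDiff.integrableOn_gradient_segment (hv : ContDiff ℝ 1 v) (a d : E) :
    IntegrableOn (fun τ : ℝ => gradient v (a + τ • d)) (Set.Ioo 0 1) := by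
  have hcont : Continuous fun τ : ℝ => gradient v (a + τ • d) := by
    have := hv.continuous_gradient
    fun_prop
  exact hcont.integrableOn_Icc.mono_set Set.Ioo_subset_Icc_self

theorem ContDiff.integral_inner_gradient_segment (hv : ContDiff ℝ 1 v) (a d : E) :
    ∫ τ in Set.Ioo (0:ℝ) 1, ⟪gradient v (a + τ • d), d⟫ = v (a + d) - v a := by
  have hcont : Continuous fun τ : ℝ => ⟪gradient v (a + τ • d), d⟫ := by
    have := hv.continuous_gradient
    fun_prop
  rw [← integral_Ioc_eq_integral_Ioo, ← intervalIntegral.integral_of_le zero_le_one,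
    intervalIntegral.integral_eq_sub_of_hasDerivAt (fun τ _ => hv.hasDerivAt_comp_add_smul a d τ)
      (hcont.intervalIntegrable 0 1)]
  simp

end Gradient

theorem EuclideanSpace.norm_sq_smul_eq_inner_smul_add_inner_smul
    (t n w : EuclideanSpace ℝ (Fin 2)) (hn0 : n 0 = t 1) (hn1 : n 1 = -t 0) :
    ‖t‖ ^ 2 • w = ⟪w, n⟫ • n + ⟪w, t⟫ • t := by
  rw [EuclideanSpace.norm_sq_eq]
  ext i
  fin_cases i <;> simp [PiLp.inner_apply, Fin.sum_univ_two, hn0, hn1] <;> ring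

theorem edge_gradient_decomposition_general
    (v : EuclideanSpace ℝ (Fin 2) → ℝ) (hv : ContDiff ℝ 1 v)
    (za zb : EuclideanSpace ℝ (Fin 2))
    (h : ℝ) (hh : h = ‖zb - za‖)
    (t n : EuclideanSpace ℝ (Fin 2))
    (ht : t = h⁻¹ • (zb - za))
    (hn0 : n 0 = t 1) (hn1 : n 1 = -t 0) :
    h • (∫ τ in Set.Ioo (0:ℝ) 1, gradient v (za + τ • (zb - za))) =
      (h * ∫ τ in Set.Ioo (0:ℝ) 1,
          (inner ℝ (gradient v (za + τ • (zb - za))) n : ℝ)) • n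
        + (v zb - v za) • t := by
  set I := ∫ τ in Set.Ioo (0:ℝ) 1, gradient v (za + τ • (zb - za))
  have hint := hv.integrableOn_gradient_segment za (zb - za)
  have hnormal : ∫ τ in Set.Ioo (0:ℝ) 1, ⟪gradient v (za + τ • (zb - za)), n⟫ = ⟪I, n⟫ :=
    integral_inner_const_right hint n
  have htangent : ⟪I, h • t⟫ = v zb - v za := by
    rw [ht, hh, norm_smul_inv_norm_smul, ← integral_inner_const_right hint,
      hv.integral_inner_gradient_segment, add_sub_cancel]
  calc h • I = h • (‖t‖ ^ 2 • I) := by rw [ht, hh, smul_smul, norm_mul_norm_inv_norm_smul_sq]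
    _ = (h * ⟪I, n⟫) • n + ⟪I, h • t⟫ • t := by
      rw [EuclideanSpace.norm_sq_smul_eq_inner_smul_add_inner_smul t n I hn0 hn1, smul_add,
        smul_smul, smul_smul, real_inner_smul_right]
    _ = _ := by rw [hnormal, htangent]

/-- The line integral of the gradient along an edge decomposes into the
normal-derivative moment times the unit normal `n` plus the tangential jump
`v(z_b) − v(z_a)` times the unit tangent `t`. -/
theorem edge_gradient_decomposition
    (v : EuclideanSpace ℝ (Fin 2) → ℝ) (hv : ContDiff ℝ 1 v)
    (za zb : EuclideanSpace ℝ (Fin 2)) (hne : za ≠ zb)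
    (h : ℝ) (hh : h = ‖zb - za‖)
    (t n : EuclideanSpace ℝ (Fin 2))
    (ht : t = h⁻¹ • (zb - za))
    (hn0 : n 0 = t 1) (hn1 : n 1 = -t 0) :
    h • (∫ τ in Set.Ioo (0:ℝ) 1, gradient v (za + τ • (zb - za))) =
      (h * ∫ τ in Set.Ioo (0:ℝ) 1,
          (inner ℝ (gradient v (za + τ • (zb - za))) n : ℝ)) • n
        + (v zb - v za) • t :=
  edge_gradient_decomposition_general v hv za zb h hh t n ht hn0 hn1
end

section
/- Let V be a real vector space, a : V → V → ℝ a bilinear form, and ℓ : V →ₗ[ℝ] ℝ a linear functional. Let (X, μ) be a measure space, g : X → ℝ a measurable function with g ≥ 0 almost everywhere, and T : V →ₗ[ℝ] (X → ℝ) a linear map such that T v is measurable and g * |T v| is integrable for every v ∈ V. Let u ∈ V and suppose there exists a measurable λ : X → ℝ with |λ| ≤ 1 almost everywhere, λ * (T u) = |T u| almost everywhere, g * λ * (T v) integrable for every v, and a u v + ∫ g λ (T v) dμ = ℓ v for all v ∈ V. Then u solves the variational inequality of the second kind: for all v ∈ V, a u (v − u) + ∫ g |T v| dμ − ∫ g |T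 u| dμ ≥ ℓ (v − u). (A solution of the Lagrange-multiplier formulation of the simplified friction problem solves the original variational inequality.) -/
open MeasureTheory

/-!
The multiplier term `v ↦ ∫ g λ (T v)` is a linear functional lying below the friction
functional `j v = ∫ g |T v|` (since `|λ| ≤ 1` and `g ≥ 0`) and touching it at `u`
(since `λ (T u) = |T u|`); that is, it is a subgradient of `j` at `u`. Subtracting the
equation `a u w + m w = ℓ w` at `w = v - u` then gives the variational inequality.
-/

noncomputable def weightedTraceIntegral {V X : Type*} [AddCommGroup V] [Module ℝ V]
    [MeasurableSpace X] (μ : Measure X) (w : X → ℝ) (T : V →ₗ[ℝ] (X → ℝ))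
    (hint : ∀ v, Integrable (fun x => w x * T v x) μ) : V →ₗ[ℝ] ℝ where
  toFun v := ∫ x, w x * T v x ∂μ
  map_add' v v' := by
    simp only [map_add, Pi.add_apply, mul_add]
    exact integral_add (hint v) (hint v')
  map_smul' c v := by
    simp only [map_smul, Pi.smul_apply, smul_eq_mul, RingHom.id_apply, mul_left_comm _ c,
      integral_const_mul]

theorem variational_inequality_of_subgradient {V : Type*} [AddCommGroup V] [Module ℝ V]
    (A ℓ m : V →ₗ[ℝ] ℝ) (j : V → ℝ) (u : V)
    (hm_le : ∀ v, m v ≤ j v) (hm_u : m u = j u) (heq : ∀ v, A v + m v = ℓ v) (v : V) :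
    A (v - u) + j v - j u ≥ ℓ (v - u) := by
  have h := heq (v - u)
  rw [map_sub m] at h
  linarith [hm_le v]

theorem mul_mul_le_mul_abs {g l t : ℝ} (hg : 0 ≤ g) (hl : |l| ≤ 1) :
    g * l * t ≤ g * |t| := by
  rw [mul_assoc]
  refine mul_le_mul_of_nonneg_left ?_ hg
  calc l * t ≤ |l * t| := le_abs_self _
    _ = |l| * |t| := abs_mul l t
    _ ≤ |t| := mul_le_of_le_one_left (abs_nonneg t) hl

theorem lagrange_solution_solves_variational_inequality_general
    {V : Type*} [AddCommGroup V] [Module ℝ V]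
    (a : V →ₗ[ℝ] V →ₗ[ℝ] ℝ) (ℓ : V →ₗ[ℝ] ℝ)
    {X : Type*} [MeasurableSpace X] (μ : Measure X)
    (g : X → ℝ) (hg : 0 ≤ᵐ[μ] g)
    (T : V →ₗ[ℝ] (X → ℝ))
    (hTint : ∀ v, Integrable (fun x => g x * |T v x|) μ)
    (u : V) (lam : X → ℝ)
    (hlam1 : ∀ᵐ x ∂μ, |lam x| ≤ 1)
    (hlamu : ∀ᵐ x ∂μ, lam x * T u x = |T u x|)
    (hint : ∀ v, Integrable (fun x => g x * lam x * T v x) μ)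
    (heq : ∀ v, a u v + ∫ x, g x * lam x * T v x ∂μ = ℓ v) :
    ∀ v, a u (v - u) + (∫ x, g x * |T v x| ∂μ) - (∫ x, g x * |T u x| ∂μ) ≥
      ℓ (v - u) := by
  refine variational_inequality_of_subgradient (a u) ℓ (weightedTraceIntegral μ (fun x => g x * lam x) T hint)
    (fun v => ∫ x, g x * |T v x| ∂μ) u (fun v => ?_) ?_ heq
  · refine integral_mono_ae (hint v) (hTint v) ?_
    filter_upwards [hg, hlam1] with x hgx hlx
    exact mul_mul_le_mul_abs hgx hlx
  · refine integral_congr_ae ?_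
    filter_upwards [hlamu] with x hx
    simp only [mul_assoc, hx]

/-- A solution of the Lagrange-multiplier formulation of the simplified friction
problem solves the original variational inequality of the second kind. -/
theorem lagrange_solution_solves_variational_inequality
    {V : Type*} [AddCommGroup V] [Module ℝ V]
    (a : V →ₗ[ℝ] V →ₗ[ℝ] ℝ) (ℓ : V →ₗ[ℝ] ℝ)
    {X : Type*} [MeasurableSpace X] (μ : Measure X)
    (g : X → ℝ) (hgmeas : Measurable g) (hg : 0 ≤ᵐ[μ] g)
    (T : V →ₗ[ℝ] (X → ℝ))
    (hTmeas : ∀ v, Measurable (T v))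
    (hTint : ∀ v, Integrable (fun x => g x * |T v x|) μ)
    (u : V) (lam : X → ℝ) (hlammeas : Measurable lam)
    (hlam1 : ∀ᵐ x ∂μ, |lam x| ≤ 1)
    (hlamu : ∀ᵐ x ∂μ, lam x * T u x = |T u x|)
    (hint : ∀ v, Integrable (fun x => g x * lam x * T v x) μ)
    (heq : ∀ v, a u v + ∫ x, g x * lam x * T v x ∂μ = ℓ v) :
    ∀ v, a u (v - u) + (∫ x, g x * |T v x| ∂μ) - (∫ x, g x * |T u x| ∂μ) ≥
      ℓ (v - u) :=
  lagrange_solution_solves_variational_inequality_general a ℓ μ g hg T hTint u lam hlam1 hlamu hint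
    heq
end
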